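/- arXiv:2112.10251 — 2 statements merged into one kernel-verified Lean document; each statement's English description precedes it below -/
import Mathlib

section
/- For every integer t > 0, the trend component Tr_t of SSDNet is bounded: Tr_t ∈ [-(t+1)·(1/2), (t+1)·(1/2)], and the seasonality component S_t of SSDNet is bounded: S_t ∈ [-(s-1+t)·(1/2), (s-1+t)·(1/2)]. -/
/-!
The trend is a random walk started in `[-1/2, 1/2]` with steps of size at most `1/2`. For the
seasonality, the recurrence says that every window of `s` consecutive values ending at `t ≥ 1`
sums to the innovation `c t`; subtracting the windows ending at `t` and `t - 1` gives
`S t - S (t - s) = c t - c (t - 1)`, so each lag-`s` step moves `S` by at most `1`. Together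
with the direct bound `|S 1| ≤ s / 2` and the bound `1 / 2` on the initial window, strong
induction gives `|S t| ≤ (s - 1 + t) / 2`.
-/

open Finset

theorem abs_le_add_mul_of_abs_sub_le {x : ℕ → ℝ} {a b : ℝ} (h0 : |x 0| ≤ a)
    (hstep : ∀ n, |x (n + 1) - x n| ≤ b) (n : ℕ) : |x n| ≤ a + n * b := by
  induction n with
  | zero => simpa using h0
  | succ n ih =>
    calc |x (n + 1)| ≤ |x n| + |x (n + 1) - x n| :=
          sub_le_iff_le_add'.mp (abs_sub_abs_le_abs_sub _ _)
      _ ≤ a + n * b + b := add_le_add ih (hstep n)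
      _ = a + (n + 1 : ℕ) * b := by push_cast; ring

theorem sum_range_sub_sum_range_sub_one {M : Type*} [AddCommGroup M] (f : ℤ → M) (t : ℤ)
    (s : ℕ) :
    ∑ j ∈ range s, f (t - j) - ∑ j ∈ range s, f (t - 1 - j) = f t - f (t - s) := by
  have hsucc := sum_range_succ (fun j : ℕ => f (t - j)) s
  rw [sum_range_succ'] at hsucc
  simp only [Nat.cast_add, Nat.cast_one, Nat.cast_zero, sub_zero, sub_add_eq_sub_sub_swap] at hsucc
  rw [sub_eq_sub_iff_add_eq_add, add_comm (f t), hsucc]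

def SeasonalRecurrence (s : ℕ) (S c : ℤ → ℝ) : Prop :=
  ∀ t : ℤ, 1 ≤ t → S t = -(∑ j ∈ Icc 1 (s - 1), S (t - j)) + c t

namespace SeasonalRecurrence

variable {s : ℕ} {S c : ℤ → ℝ}

theorem sum_window (hS : SeasonalRecurrence s S c) (hs : 1 ≤ s) {t : ℤ} (ht : 1 ≤ t) :
    ∑ j ∈ range s, S (t - j) = c t := by
  have hs_not_min : ¬IsMin s := by simp only [isMin_iff_eq_bot, Nat.bot_eq_zero]; omega
  rw [sum_range_eq_add_Ico _ hs, ← Icc_sub_one_right_eq_Ico_of_not_isMin hs_not_min,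
    Nat.cast_zero, sub_zero, hS t ht]
  abel

theorem sub_lag (hS : SeasonalRecurrence s S c) (hs : 1 ≤ s) {t : ℤ} (ht : 2 ≤ t) :
    S t - S (t - s) = c t - c (t - 1) := by
  rw [← sum_range_sub_sum_range_sub_one, hS.sum_window hs (by omega),
    hS.sum_window hs (by omega)]

theorem abs_one_le (hS : SeasonalRecurrence s S c) (hs : 1 ≤ s) (hc : |c 1| ≤ 1 / 2)
    (hS0 : ∀ j : ℤ, 1 - (s : ℤ) ≤ j → j ≤ 0 → |S j| ≤ 1 / 2) : |S 1| ≤ s / 2 := by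
  have hsum : ∑ j ∈ Icc 1 (s - 1), |S (1 - j)| ≤ (s - 1 : ℕ) * (1 / 2) := by
    have hbound (j : ℕ) (hj : j ∈ Icc 1 (s - 1)) : |S (1 - j)| ≤ 1 / 2 := by
      rw [mem_Icc] at hj
      exact hS0 (1 - j) (by omega) (by omega)
    simpa using sum_le_card_nsmul _ _ _ hbound
  calc |S 1| ≤ ∑ j ∈ Icc 1 (s - 1), |S (1 - j)| + |c 1| := by
        rw [hS 1 le_rfl]
        exact (abs_add_le _ _).trans (by rw [abs_neg]; gcongr; exact abs_sum_le_sum_abs _ _)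
    _ ≤ (s - 1 : ℕ) * (1 / 2) + 1 / 2 := add_le_add hsum hc
    _ = s / 2 := by push_cast [hs]; ring

theorem abs_le (hS : SeasonalRecurrence s S c) (hs : 2 ≤ s)
    (hc : ∀ t : ℤ, 1 ≤ t → |c t| ≤ 1 / 2)
    (hS0 : ∀ j : ℤ, 1 - (s : ℤ) ≤ j → j ≤ 0 → |S j| ≤ 1 / 2)
    {t : ℕ} (ht : 1 ≤ t) :
    |S t| ≤ (s - 1 + t) / 2 := by
  induction t using Nat.strong_induction_on with | _ t ih => ?_
  rcases ht.eq_or_lt with rfl | ht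
  · have := hS.abs_one_le (by omega) (hc 1 le_rfl) hS0
    push_cast
    linarith
  have hprev : |S (t - s)| ≤ max (1 / 2 : ℝ) ((t - 1) / 2) := by
    rcases le_or_gt t s with hts | hts
    · exact le_max_of_le_left (hS0 (t - s) (by omega) (by omega))
    · have := ih (t - s) (by omega) (by omega)
      push_cast [hts.le] at this
      exact le_max_of_le_right (by linarith)
  have hlag : |S t - S (t - s)| ≤ 1 := by
    rw [hS.sub_lag (by omega) (by omega)]
    have := abs_sub (c t) (c (t - 1))
    linarith [hc t (by omega), hc (t - 1) (by omega)]
  have hsR : (2 : ℝ) ≤ s := by exact_mod_cast hs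
  have htR : (2 : ℝ) ≤ t := by exact_mod_cast ht
  calc |S t| ≤ |S (t - s)| + |S t - S (t - s)| :=
        sub_le_iff_le_add'.mp (abs_sub_abs_le_abs_sub _ _)
    _ ≤ max (1 / 2 : ℝ) ((t - 1) / 2) + 1 := add_le_add hprev hlag
    _ ≤ (s - 1 + t) / 2 := by rw [← max_add_add_right]; exact max_le (by linarith) (by linarith)

end SeasonalRecurrence

/-- Theorem 1 of the paper (SSDNet): for every integer `t > 0`, the trend
component `Tr t` lies in `[-(t+1)/2, (t+1)/2]` and the seasonality component
`S t` lies in `[-(s-1+t)/2, (s-1+t)/2]`. -/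
theorem ssdnet_trend_and_seasonality_bounds
    (s : ℕ) (hs : 2 ≤ s)
    (Tr : ℕ → ℝ) (c1 : ℕ → ℝ)
    (S : ℤ → ℝ) (c2 : ℤ → ℝ)
    (hTr : ∀ t : ℕ, 1 ≤ t → Tr t = Tr (t - 1) + c1 t)
    (hc1 : ∀ t : ℕ, 1 ≤ t → |c1 t| ≤ 1 / 2)
    (hTr0 : |Tr 0| ≤ 1 / 2)
    (hS : ∀ t : ℤ, 1 ≤ t → S t = -(∑ j ∈ Finset.Icc 1 (s - 1), S (t - (j : ℤ))) + c2 t)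
    (hc2 : ∀ t : ℤ, 1 ≤ t → |c2 t| ≤ 1 / 2)
    (hS0 : ∀ j : ℤ, 1 - (s : ℤ) ≤ j → j ≤ 0 → |S j| ≤ 1 / 2) :
    ∀ t : ℕ, 0 < t →
      Tr t ∈ Set.Icc (-(((t : ℝ) + 1) * (1 / 2))) (((t : ℝ) + 1) * (1 / 2)) ∧
      S (t : ℤ) ∈ Set.Icc (-(((s : ℝ) - 1 + (t : ℝ)) * (1 / 2)))
        (((s : ℝ) - 1 + (t : ℝ)) * (1 / 2)) := by
  intro t ht
  have hstep (n : ℕ) : |Tr (n + 1) - Tr n| ≤ 1 / 2 := by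
    rw [hTr (n + 1) n.succ_pos, Nat.add_sub_cancel, add_sub_cancel_left]
    exact hc1 (n + 1) n.succ_pos
  have htrend := abs_le_add_mul_of_abs_sub_le hTr0 hstep t
  have hseason := SeasonalRecurrence.abs_le hS hs hc2 hS0 ht
  exact ⟨abs_le.mp (htrend.trans_eq (by ring)),
    abs_le.mp (hseason.trans_eq (div_eq_mul_one_div _ _))⟩
end

section
/- For every integer t ≥ 1, the seasonality component satisfies |S_t| ≤ (s-1+t)/2; equivalently S_t ∈ [-(s-1+t)·(1/2), (s-1+t)·(1/2)]. -/
/-!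
Both sides of the recurrence are sums over a window of `s` consecutive values: it says
`S t + S (t - 1) + ⋯ + S (t - s + 1) = c t`. Subtracting the instance at `t - 1` from the one at
`t` telescopes to `S t - S (t - s) = c t - c (t - 1)` for `t ≥ 2`, so `|S|` grows by at most `1`
every `s` steps. Together with `|S 1| ≤ (s - 1)/2 + 1/2` from the recurrence at `t = 1` and the
bound `1/2` on the initial values, induction along steps of length `s` gives the claim.
-/

open Finset

theorem Finset.add_sum_Icc_one_pred_eq_sum_range {M : Type*} [AddCommMonoid M] (f : ℕ → M)
    {s : ℕ} (hs : 1 ≤ s) : f 0 + ∑ j ∈ Icc 1 (s - 1), f j = ∑ j ∈ range s, f j := by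
  rw [range_eq_Ico, sum_eq_sum_Ico_succ_bot hs, ← Ico_add_one_right_eq_Icc, Nat.sub_add_cancel hs]

theorem Finset.sum_range_sub_sum_range_shift {G : Type*} [AddCommGroup G] (f : ℤ → G) (s : ℕ)
    (t : ℤ) : ∑ j ∈ range s, f (t - j) - ∑ j ∈ range s, f (t - 1 - j) = f t - f (t - s) := by
  rw [← sum_sub_distrib]
  convert sum_range_sub' (fun j : ℕ ↦ f (t - j)) s using 3 with j <;> push_cast <;> ring_nf

def SatisfiesSeasonalRecurrence (s : ℕ) (S c : ℤ → ℝ) : Prop :=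
  ∀ t : ℤ, 1 ≤ t → S t = -(∑ j ∈ Icc 1 (s - 1), S (t - (j : ℤ))) + c t

namespace SatisfiesSeasonalRecurrence

variable {s : ℕ} {S c : ℤ → ℝ}

theorem sum_range_eq (hS : SatisfiesSeasonalRecurrence s S c) (hs : 1 ≤ s) {t : ℤ}
    (ht : 1 ≤ t) : ∑ j ∈ range s, S (t - j) = c t := by
  rw [← add_sum_Icc_one_pred_eq_sum_range (fun j : ℕ ↦ S (t - j)) hs, Nat.cast_zero, sub_zero]
  linarith [hS t ht]

theorem sub_lag_eq (hS : SatisfiesSeasonalRecurrence s S c) (hs : 1 ≤ s) {t : ℤ} (ht : 2 ≤ t) :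
    S t - S (t - s) = c t - c (t - 1) := by
  rw [← sum_range_sub_sum_range_shift, hS.sum_range_eq hs (by omega),
    hS.sum_range_eq hs (by omega)]

theorem abs_le_abs_lag_add (hS : SatisfiesSeasonalRecurrence s S c) (hs : 1 ≤ s) {b : ℝ}
    (hc : ∀ t : ℤ, 1 ≤ t → |c t| ≤ b) {t : ℤ} (ht : 2 ≤ t) :
    |S t| ≤ |S (t - s)| + 2 * b := by
  calc |S t| = |S (t - s) + (c t - c (t - 1))| := by rw [← hS.sub_lag_eq hs ht, add_sub_cancel]
    _ ≤ |S (t - s)| + (|c t| + |c (t - 1)|) :=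
        (abs_add_le _ _).trans (by gcongr; exact abs_sub _ _)
    _ ≤ |S (t - s)| + 2 * b := by linarith [hc t (by omega), hc (t - 1) (by omega)]

theorem abs_one_le (hS : SatisfiesSeasonalRecurrence s S c) (hs : 1 ≤ s) {a b : ℝ}
    (hc : |c 1| ≤ b) (hS0 : ∀ j : ℤ, 1 - (s : ℤ) ≤ j → j ≤ 0 → |S j| ≤ a) :
    |S 1| ≤ (s - 1) * a + b := by
  have hsum : |∑ j ∈ Icc 1 (s - 1), S (1 - (j : ℤ))| ≤ (s - 1) * a :=
    calc |∑ j ∈ Icc 1 (s - 1), S (1 - (j : ℤ))| ≤ ∑ j ∈ Icc 1 (s - 1), |S (1 - (j : ℤ))| :=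
          abs_sum_le_sum_abs _ _
      _ ≤ #(Icc 1 (s - 1)) • a := by
          refine sum_le_card_nsmul _ _ _ fun j hj ↦ hS0 _ ?_ ?_ <;> grind
      _ = (s - 1) * a := by simp [Nat.cast_sub hs]
  calc |S 1| = |-(∑ j ∈ Icc 1 (s - 1), S (1 - (j : ℤ))) + c 1| := by rw [← hS 1 le_rfl]
    _ ≤ |∑ j ∈ Icc 1 (s - 1), S (1 - (j : ℤ))| + |c 1| :=
        (abs_add_le _ _).trans_eq (by rw [abs_neg])
    _ ≤ (s - 1) * a + b := add_le_add hsum hc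

end SatisfiesSeasonalRecurrence

/-- Seasonality part of Theorem 1 of the paper (SSDNet): for every integer
`t ≥ 1`, the seasonality component satisfies `|S t| ≤ (s - 1 + t)/2`. -/
theorem ssdnet_seasonality_bound
    (s : ℕ) (hs : 2 ≤ s)
    (S : ℤ → ℝ) (c2 : ℤ → ℝ)
    (hS : ∀ t : ℤ, 1 ≤ t → S t = -(∑ j ∈ Finset.Icc 1 (s - 1), S (t - (j : ℤ))) + c2 t)
    (hc2 : ∀ t : ℤ, 1 ≤ t → |c2 t| ≤ 1 / 2)
    (hS0 : ∀ j : ℤ, 1 - (s : ℤ) ≤ j → j ≤ 0 → |S j| ≤ 1 / 2) :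
    ∀ t : ℤ, 1 ≤ t → |S t| ≤ ((s : ℝ) - 1 + (t : ℝ)) / 2 := by
  have hrec : SatisfiesSeasonalRecurrence s S c2 := hS
  have hs1 : 1 ≤ s := by omega
  have hsR : (2 : ℝ) ≤ s := by exact_mod_cast hs
  -- Strengthened so that the lag `t - s` of every `t ≥ 1` stays in range: on the initial values
  -- `S (2 - s), …, S 0` the bound is at least `1/2`.
  suffices h : ∀ t : ℤ, 2 - (s : ℤ) ≤ t → |S t| ≤ ((s : ℝ) - 1 + t) / 2 from
    fun t ht ↦ h t (by omega)
  intro t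
  induction t using Int.strongRec (m := 2 - (s : ℤ)) with
  | lt t ht => intro h; omega
  | ge t ht ih =>
    intro _
    have htR : (2 : ℝ) - s ≤ t := by exact_mod_cast ht
    rcases lt_trichotomy t 1 with hneg | rfl | hpos
    · linarith [hS0 t (by omega) (by omega)]
    · linarith [hrec.abs_one_le hs1 (hc2 1 le_rfl) hS0]
    · have hlag := ih (t - s) (by omega) (by omega)
      push_cast at hlag
      linarith [hrec.abs_le_abs_lag_add hs1 hc2 (t := t) (by omega)]
end
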